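/- arXiv:1511.00457 — 9 statements merged into one kernel-verified Lean document; each statement's English description precedes it below -/
import Mathlib

section
/- For any full [n]-tuple σ (an ordered partition of [n] into nonempty blocks) and any element x in the flippable set F(σ), the element x also belongs to F(F(σ,x)), and applying the flip operation twice returns σ: F(F(σ,x),x) = σ. -/
/-- A full `[n]`-tuple: an ordered partition of `Fin n` into pairwise disjoint
nonempty blocks covering everything. -/
def IsFullTuple (n : ℕ) (l : List (Finset (Fin n))) : Prop :=
  (∀ A ∈ l, A.Nonempty) ∧ l.Pairwise Disjoint ∧ l.foldr (· ∪ ·) ∅ = Finset.univ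

/-- The flippable set `F(σ)`: everything, unless the last block is a singleton,
in which case that singleton is excluded. -/
def flippable (n : ℕ) (l : List (Finset (Fin n))) : Finset (Fin n) :=
  match l.getLast? with
  | some A => if A.card = 1 then Finset.univ \ A else Finset.univ
  | none => Finset.univ

/-- The flip operation `F(σ, x)`: split `x` off from its block if that block has
at least two elements; otherwise merge the singleton block `{x}` into the next block. -/
def cflip {n : ℕ} (x : Fin n) : List (Finset (Fin n)) → List (Finset (Fin n))
  | [] => []
  | A :: rest =>
      if x ∈ A then
        if 2 ≤ A.card then {x} :: A.erase x :: rest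
        else
          match rest with
          | [] => A :: rest
          | B :: rest' => insert x B :: rest'
      else A :: cflip x rest

/-!
Splitting `x` off its block `A` produces the singleton `{x}` followed by `A \ {x}`, and flipping
`x` again merges them back. Merging `{x}` into the next block `B` produces a block of size at
least two (as `B` is nonempty and misses `x`), and flipping `x` again splits it back into
`{x}` and `B`. Blocks not containing `x` are untouched, and the last block only changes into
`A \ {x}` or `insert x B`, neither of which is `{x}`.
-/

theorem Finset.eq_singleton_of_mem_of_card_lt_two {α : Type*} {A : Finset α} {x : α}
    (hx : x ∈ A) (hA : ¬2 ≤ A.card) : A = {x} :=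
  Finset.eq_singleton_iff_unique_mem.mpr
    ⟨hx, fun _ hy ↦ Finset.card_le_one.mp (by omega) _ hy _ hx⟩

theorem Finset.two_le_card_insert {α : Type*} [DecidableEq α] {B : Finset α} {x : α}
    (hB : B.Nonempty) (hx : x ∉ B) : 2 ≤ (insert x B).card := by
  rw [Finset.card_insert_of_notMem hx]
  have := hB.card_pos
  omega

section
variable {n : ℕ} {x : Fin n}

theorem mem_flippable_iff {l : List (Finset (Fin n))} :
    x ∈ flippable n l ↔ l.getLast? ≠ some {x} := by
  unfold flippable
  split
  next A hA =>
    rw [hA, Ne, Option.some_inj]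
    split_ifs with hcard
    · obtain ⟨a, rfl⟩ := Finset.card_eq_one.mp hcard
      simp [eq_comm]
    · simp only [Finset.mem_univ, true_iff]
      rintro rfl
      exact hcard (Finset.card_singleton x)
  next hA => simp [hA]

theorem cflip_cons_of_notMem {A : Finset (Fin n)} (hx : x ∉ A) (t : List (Finset (Fin n))) :
    cflip x (A :: t) = A :: cflip x t := by
  simp [cflip, hx]

theorem cflip_cons_of_two_le_card {A : Finset (Fin n)} (hx : x ∈ A) (hA : 2 ≤ A.card)
    (t : List (Finset (Fin n))) : cflip x (A :: t) = {x} :: A.erase x :: t := by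
  simp [cflip, hx, hA]

theorem cflip_singleton_cons_cons (B : Finset (Fin n)) (t : List (Finset (Fin n))) :
    cflip x ({x} :: B :: t) = insert x B :: t := by
  simp [cflip]

theorem cflip_ne_nil {l : List (Finset (Fin n))} (hl : l ≠ []) : cflip x l ≠ [] := by
  obtain ⟨A, t, rfl⟩ := List.exists_cons_of_ne_nil hl
  unfold cflip
  split_ifs <;> (try split) <;> simp

theorem cflip_cflip {l : List (Finset (Fin n))} (hne : ∀ A ∈ l, A.Nonempty)
    (hdisj : l.Pairwise Disjoint) : cflip x (cflip x l) = l := by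
  induction l with
  | nil => rfl
  | cons A t ih =>
    rw [List.pairwise_cons] at hdisj
    by_cases hxA : x ∈ A
    · by_cases hcard : 2 ≤ A.card
      · rw [cflip_cons_of_two_le_card hxA hcard, cflip_singleton_cons_cons,
          Finset.insert_erase hxA]
      obtain rfl := Finset.eq_singleton_of_mem_of_card_lt_two hxA hcard
      cases t with
      | nil => simp [cflip]
      | cons B t =>
        have hxB : x ∉ B := Finset.disjoint_singleton_left.mp (hdisj.1 B List.mem_cons_self)
        rw [cflip_singleton_cons_cons, cflip_cons_of_two_le_card (Finset.mem_insert_self x B)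
          (Finset.two_le_card_insert (hne B (by simp)) hxB), Finset.erase_insert hxB]
    · rw [cflip_cons_of_notMem hxA, cflip_cons_of_notMem hxA,
        ih (fun B hB ↦ hne B (List.mem_cons_of_mem A hB)) hdisj.2]

theorem getLast?_cflip_ne_singleton {l : List (Finset (Fin n))} (hne : ∀ A ∈ l, A.Nonempty)
    (hdisj : l.Pairwise Disjoint) (hl : l.getLast? ≠ some {x}) :
    (cflip x l).getLast? ≠ some {x} := by
  induction l with
  | nil => simp [cflip]
  | cons A t ih =>
    rw [List.pairwise_cons] at hdisj
    by_cases hxA : x ∈ A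
    · by_cases hcard : 2 ≤ A.card
      · rw [cflip_cons_of_two_le_card hxA hcard, List.getLast?_cons_cons]
        cases t with
        | nil =>
          rw [List.getLast?_singleton, Ne, Option.some_inj]
          intro h
          exact Finset.notMem_erase x A (h ▸ Finset.mem_singleton_self x)
        | cons B t => rwa [List.getLast?_cons_cons] at hl ⊢
      obtain rfl := Finset.eq_singleton_of_mem_of_card_lt_two hxA hcard
      cases t with
      | nil => exact absurd rfl hl
      | cons B t =>
        have hxB : x ∉ B := Finset.disjoint_singleton_left.mp (hdisj.1 B List.mem_cons_self)
        rw [cflip_singleton_cons_cons]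
        cases t with
        | nil =>
          rw [List.getLast?_singleton, Ne, Option.some_inj]
          intro h
          simpa [h] using Finset.two_le_card_insert (hne B (by simp)) hxB
        | cons C t => rwa [List.getLast?_cons_cons, List.getLast?_cons_cons] at hl
    · rw [cflip_cons_of_notMem hxA]
      cases t with
      | nil => simpa [cflip] using hl
      | cons B t =>
        rw [List.getLast?_cons_of_ne_nil (cflip_ne_nil (List.cons_ne_nil B t))]
        rw [List.getLast?_cons_cons] at hl
        exact ih (fun C hC ↦ hne C (List.mem_cons_of_mem A hC)) hdisj.2 hl
end

/-- For any full `[n]`-tuple `σ` and `x ∈ F(σ)`, we have `x ∈ F(F(σ,x))` and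
`F(F(σ,x),x) = σ`. -/
theorem flip_involutive (n : ℕ) (l : List (Finset (Fin n))) (x : Fin n)
    (hl : IsFullTuple n l) (hx : x ∈ flippable n l) :
    x ∈ flippable n (cflip x l) ∧ cflip x (cflip x l) = l := by
  obtain ⟨hne, hdisj, -⟩ := hl
  rw [mem_flippable_iff] at hx ⊢
  exact ⟨getLast?_cflip_ne_singleton hne hdisj hx, cflip_cflip hne hdisj⟩
end

section
/- For any order R = (x_1,...,x_n) on the whole set [n], the standard matching μ_R on the flip graph Γ_n is near-perfect: it has exactly one critical (unmatched) vertex, namely the full [n]-tuple {x_1}|{x_2}|...|{x_n}. -/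
/-- The `V`-prefix of a tuple: the maximal initial segment of blocks each
contained in `V`. -/
def prefV {n : ℕ} (V : Finset (Fin n)) (l : List (Finset (Fin n))) :
    List (Finset (Fin n)) :=
  l.takeWhile fun A => decide (A ⊆ V)

/-- Auxiliary function, operating on the reversed order `R` and the reversed
tuple: returns the element `x_h` where `h` is the height (the first element of
`R`, read from the end, at which the tuple stops matching the suffix of
singletons `{x_{h+1}}|...|{x_d}`), or `none` if the height is `0`. -/
def heightElemRev {n : ℕ} : List (Fin n) → List (Finset (Fin n)) → Option (Fin n)
  | [], _ => none
  | x :: _, [] => some x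
  | x :: xs, A :: As => if A = {x} then heightElemRev xs As else some x

/-- For an order `R = (x_1,...,x_d)` and a tuple `σ`, `heightElem R σ` is the
element `x_h` with `h = h_R(σ)` when `h_R(σ) ≠ 0`, and `none` when `h_R(σ) = 0`.
The standard matching `μ_R` sends `σ` to `F(σ, heightElem R σ)`. -/
def heightElem {n : ℕ} (R : List (Fin n)) (l : List (Finset (Fin n))) :
    Option (Fin n) :=
  heightElemRev R.reverse l.reverse

/-!
A tuple has height `0` exactly when it ends with the singleton blocks `{x_1}|...|{x_n}`.
Since `R` exhausts `[n]` this suffix already has at least `n` blocks, while a full `[n]`-tuple,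
being a partition of `[n]` into nonempty blocks, has at most `n` of them; so the suffix
is the whole tuple.
-/

lemma heightElemRev_eq_none_iff {n : ℕ} (xs : List (Fin n)) (As : List (Finset (Fin n))) :
    heightElemRev xs As = none ↔ xs.map (fun x => ({x} : Finset (Fin n))) <+: As := by
  induction xs generalizing As with
  | nil => simp [heightElemRev]
  | cons x xs ih =>
    cases As with
    | nil => simp [heightElemRev]
    | cons A As =>
      by_cases h : A = {x}
      · simp [heightElemRev, h, ih]
      · simp [heightElemRev, h, List.cons_prefix_cons, Ne.symm h]

lemma heightElem_eq_none_iff {n : ℕ} (R : List (Fin n)) (l : List (Finset (Fin n))) :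
    heightElem R l = none ↔ R.map (fun x => ({x} : Finset (Fin n))) <:+ l := by
  rw [heightElem, heightElemRev_eq_none_iff, List.map_reverse, List.reverse_prefix]

lemma mem_foldr_union_iff {α : Type*} [DecidableEq α] {l : List (Finset α)} {x : α} :
    x ∈ l.foldr (· ∪ ·) ∅ ↔ ∃ A ∈ l, x ∈ A := by
  induction l <;> simp [*]

lemma card_foldr_union_of_pairwise_disjoint {α : Type*} [DecidableEq α]
    {l : List (Finset α)} (hl : l.Pairwise Disjoint) :
    (l.foldr (· ∪ ·) ∅).card = (l.map Finset.card).sum := by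
  induction l with
  | nil => simp
  | cons A As ih =>
    rw [List.pairwise_cons] at hl
    have hA : Disjoint A (As.foldr (· ∪ ·) ∅) := Finset.disjoint_left.2 fun x hxA hx => by
      obtain ⟨B, hB, hxB⟩ := mem_foldr_union_iff.1 hx
      exact Finset.disjoint_left.1 (hl.1 B hB) hxA hxB
    rw [List.foldr_cons, List.map_cons, List.sum_cons, Finset.card_union_of_disjoint hA, ih hl.2]

lemma length_le_card_of_pairwise_disjoint {α : Type*} [Fintype α] [DecidableEq α]
    {l : List (Finset α)} (hne : ∀ A ∈ l, A.Nonempty) (hl : l.Pairwise Disjoint) :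
    l.length ≤ Fintype.card α :=
  calc l.length = (l.map Finset.card).length := (List.length_map _).symm
    _ ≤ (l.map Finset.card).sum := List.length_le_sum_of_one_le _ fun k hk => by
        obtain ⟨A, hA, rfl⟩ := List.mem_map.1 hk
        exact (hne A hA).card_pos
    _ = (l.foldr (· ∪ ·) ∅).card := (card_foldr_union_of_pairwise_disjoint hl).symm
    _ ≤ Fintype.card α := Finset.card_le_univ _

lemma card_le_length_of_forall_mem {α : Type*} [Fintype α] [DecidableEq α] {l : List α}
    (hl : ∀ x, x ∈ l) : Fintype.card α ≤ l.length :=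
  calc Fintype.card α = Finset.univ.card := Finset.card_univ.symm
    _ ≤ l.toFinset.card := Finset.card_le_card fun x _ => List.mem_toFinset.2 (hl x)
    _ ≤ l.length := List.toFinset_card_le l

theorem standard_matching_near_perfect_general (n : ℕ) (R : List (Fin n))
    (hall : ∀ x : Fin n, x ∈ R)
    (l : List (Finset (Fin n))) (hl : IsFullTuple n l) :
    heightElem R l = none ↔ l = R.map (fun x => ({x} : Finset (Fin n))) := by
  rw [heightElem_eq_none_iff]
  refine ⟨fun hsuffix => (hsuffix.eq_of_length_le ?_).symm, fun h => h ▸ List.suffix_refl _⟩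
  calc l.length ≤ n := by
        simpa using length_le_card_of_pairwise_disjoint hl.1 hl.2.1
    _ ≤ R.length := by simpa using card_le_length_of_forall_mem hall
    _ = (R.map _).length := (List.length_map _).symm

/-- For any order `R = (x_1,...,x_n)` on all of `[n]`, the standard matching
`μ_R` on `Γ_n` is near-perfect: a full `[n]`-tuple is critical (unmatched, i.e.
of height `0`) if and only if it is the unique tuple `{x_1}|{x_2}|...|{x_n}`. -/
theorem standard_matching_near_perfect (n : ℕ) (R : List (Fin n))
    (hnd : R.Nodup) (hall : ∀ x : Fin n, x ∈ R)
    (l : List (Finset (Fin n))) (hl : IsFullTuple n l) :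
    heightElem R l = none ↔ l = R.map (fun x => ({x} : Finset (Fin n))) :=
  standard_matching_near_perfect_general n R hall l hl
end

section
/- Let V be a nonempty subset of [n] and R an order on [n]\V. Then the standard matching μ_R restricted to the subgraph Γ_n(V) is a perfect matching. -/
/-!
A tuple of height `0` ends with the singletons `{x_1}|...|{x_d}` of all of `[n] \ V`. As the
blocks are disjoint and cover `[n]`, the blocks before that suffix partition `V ≠ ∅`, so there
is a first one and it lies in `V`; hence every vertex of `Γ_n(V)` has a height `h ≠ 0`. The
element `x_h` is not in `V`, and flipping it either leaves the first block alone or makes the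
first block contain `x_h`, so the partner stays in `Γ_n(V)`.
-/

theorem Finset.mem_foldr_union {α : Type*} [DecidableEq α] (a : α) :
    ∀ l : List (Finset α), a ∈ l.foldr (· ∪ ·) ∅ ↔ ∃ A ∈ l, a ∈ A
  | [] => by simp
  | A :: l => by simp [Finset.mem_foldr_union a l]

theorem IsFullTuple.exists_mem {n : ℕ} {l : List (Finset (Fin n))} (hl : IsFullTuple n l)
    (a : Fin n) : ∃ A ∈ l, a ∈ A := by
  rw [← Finset.mem_foldr_union, hl.2.2]
  exact Finset.mem_univ a

theorem IsFullTuple.mem_of_map_singleton {n : ℕ} {R : List (Fin n)}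
    (hl : IsFullTuple n (R.map ({·}))) (a : Fin n) : a ∈ R := by
  obtain ⟨A, hA, haA⟩ := hl.exists_mem a
  obtain ⟨x, hx, rfl⟩ := List.mem_map.1 hA
  rwa [Finset.mem_singleton.1 haA]

theorem notMem_head_of_pairwise_disjoint_append_singletons {α : Type*}
    {A : Finset α} {m : List (Finset α)} {R : List α}
    (h : (A :: m ++ R.map ({·})).Pairwise Disjoint) {x : α} (hx : x ∈ R) : x ∉ A := by
  have hdisj : Disjoint A {x} := (List.pairwise_cons.1 h).1 {x} (by simp [hx])
  exact Finset.disjoint_singleton_right.1 hdisj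

theorem heightElemRev_eq_none {n : ℕ} :
    ∀ {S : List (Fin n)} {m : List (Finset (Fin n))},
      heightElemRev S m = none → ∃ m', m = S.map ({·}) ++ m'
  | [], m, _ => ⟨m, rfl⟩
  | _ :: _, [], h => by simp [heightElemRev] at h
  | x :: xs, A :: As, h => by
      simp only [heightElemRev] at h
      split_ifs at h with hA
      obtain ⟨m', rfl⟩ := heightElemRev_eq_none h
      exact ⟨m', by simp [hA]⟩

theorem heightElem_eq_none {n : ℕ} {R : List (Fin n)} {l : List (Finset (Fin n))}
    (h : heightElem R l = none) : ∃ m, l = m ++ R.map ({·}) := by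
  obtain ⟨m', hm⟩ := heightElemRev_eq_none h
  refine ⟨m'.reverse, ?_⟩
  simpa [List.map_reverse] using congrArg List.reverse hm

theorem mem_of_heightElemRev_eq_some {n : ℕ} :
    ∀ {S : List (Fin n)} {m : List (Finset (Fin n))} {x : Fin n},
      heightElemRev S m = some x → x ∈ S
  | [], _, _, h => by simp [heightElemRev] at h
  | _ :: _, [], _, h => by simp_all [heightElemRev]
  | y :: ys, A :: As, x, h => by
      simp only [heightElemRev] at h
      split_ifs at h
      · exact List.mem_cons_of_mem y (mem_of_heightElemRev_eq_some h)
      · simp_all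

theorem mem_of_heightElem_eq_some {n : ℕ} {R : List (Fin n)} {l : List (Finset (Fin n))}
    {x : Fin n} (h : heightElem R l = some x) : x ∈ R :=
  List.mem_reverse.1 (mem_of_heightElemRev_eq_some h)

theorem head?_cflip {n : ℕ} {x : Fin n} {l : List (Finset (Fin n))} {B : Finset (Fin n)}
    (h : (cflip x l).head? = some B) : l.head? = some B ∨ x ∈ B := by
  rcases l with _ | ⟨A, _ | ⟨C, rest⟩⟩ <;> simp only [cflip] at h
  · simp at h
  all_goals
    split_ifs at h <;> simp only [List.head?_cons, Option.some.injEq] at h <;> subst h <;> simp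

theorem standard_matching_perfect_on_GnV_general (n : ℕ) (V : Finset (Fin n))
    (hV : V.Nonempty) (R : List (Fin n))
    (hR : ∀ x : Fin n, x ∈ R ↔ x ∉ V)
    (l : List (Finset (Fin n))) (hl : IsFullTuple n l)
    (hlV : ∀ A, l.head? = some A → ¬ A ⊆ V) :
    ∃ xh : Fin n, heightElem R l = some xh ∧
      ∀ B, (cflip xh l).head? = some B → ¬ B ⊆ V := by
  cases h : heightElem R l with
  | none =>
      exfalso
      obtain ⟨m, rfl⟩ := heightElem_eq_none h
      cases m with
      | nil =>
          obtain ⟨v, hv⟩ := hV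
          exact (hR v).1 (hl.mem_of_map_singleton v) hv
      | cons A m =>
          refine hlV A rfl fun a ha => ?_
          by_contra haV
          exact notMem_head_of_pairwise_disjoint_append_singletons hl.2.1 ((hR a).2 haV) ha
  | some x =>
      have hxV : x ∉ V := (hR x).1 (mem_of_heightElem_eq_some h)
      refine ⟨x, rfl, fun B hB hBV => ?_⟩
      rcases head?_cflip hB with hlB | hxB
      · exact hlV B hlB hBV
      · exact hxV (hBV hxB)

/-- Let `V` be a nonempty subset of `[n]` and `R` an order on `[n] \ V`. The
standard matching `μ_R` restricted to the subgraph `Γ_n(V)` (induced by full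
tuples whose first block is not contained in `V`) is a perfect matching: every
vertex of `Γ_n(V)` has nonzero height, hence is matched, and its partner
`F(σ,x_h)` again lies in `Γ_n(V)`. -/
theorem standard_matching_perfect_on_GnV (n : ℕ) (V : Finset (Fin n))
    (hV : V.Nonempty) (R : List (Fin n)) (hnd : R.Nodup)
    (hR : ∀ x : Fin n, x ∈ R ↔ x ∉ V)
    (l : List (Finset (Fin n))) (hl : IsFullTuple n l)
    (hlV : ∀ A, l.head? = some A → ¬ A ⊆ V) :
    ∃ xh : Fin n, heightElem R l = some xh ∧
      ∀ B, (cflip xh l).head? = some B → ¬ B ⊆ V :=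
  standard_matching_perfect_on_GnV_general n V hV R hR l hl hlV
end

section
/- In a bipartite graph G with a matching μ, if there exists a properly alternating edge path (possibly self-intersecting) between two distinct vertices v and w, then there exists a properly alternating non-self-intersecting edge path between v and w. -/
/-- `M` is a (partial) matching on `G`, given as a set of edges no two of which
share a vertex. -/
def IsMatchingSet {V : Type*} (G : SimpleGraph V) (M : Set (Sym2 V)) : Prop :=
  M ⊆ G.edgeSet ∧ ∀ e ∈ M, ∀ f ∈ M, e ≠ f → ∀ x, x ∈ e → x ∉ f

/-- A vertex is critical (unmatched) with respect to `M`. -/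
def CriticalVtx {V : Type*} (M : Set (Sym2 V)) (v : V) : Prop :=
  ∀ e ∈ M, v ∉ e

/-- A walk is properly alternating with respect to `M`: consecutive edges
alternate between matching and non-matching edges, and at each end it either
starts/ends with a matching edge or starts/ends at a critical vertex. -/
def ProperlyAlternating {V : Type*} {G : SimpleGraph V} (M : Set (Sym2 V))
    {v w : V} (p : G.Walk v w) : Prop :=
  (p.edges.Chain' fun e f => (e ∈ M ↔ f ∉ M)) ∧
  (∀ e ∈ p.edges.head?, e ∈ M ∨ CriticalVtx M v) ∧
  (∀ e ∈ p.edges.getLast?, e ∈ M ∨ CriticalVtx M w)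

/-!
Fix a 2-colouring `C` of `G`. Consecutive darts of a walk start at vertices of different colours,
so a walk alternates with respect to `M` exactly when the matching status of each of its darts is
read off the colour of its tail: `d.edge ∈ M ↔ C d.fst = k` for one fixed colour `k`. This
description does not mention positions along the walk, so it passes to `p.bypass`, a path whose
darts are among those of `p`. The end conditions pass as well: the first dart of either walk starts
at `v` and the last one ends at `w`, so their statuses agree with those of the end darts of `p`.
-/

namespace SimpleGraph

variable {V : Type*} {G : SimpleGraph V} (C : G.Coloring (Fin 2)) (M : Set (Sym2 V))

lemma Coloring.eq_iff_ne_of_adj {x y : V} (h : G.Adj x y) (k : Fin 2) : C x = k ↔ C y ≠ k := by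
  have := C.valid h
  generalize C x = a, C y = b at this
  revert a b k
  decide

lemma isChain_alternating_map_edge {l : List G.Dart} (hl : l.IsChain G.DartAdj) {k : Fin 2}
    (hk : ∀ d ∈ l, d.edge ∈ M ↔ C d.fst = k) :
    (l.map Dart.edge).IsChain fun e f => (e ∈ M ↔ f ∉ M) := by
  rw [List.isChain_map]
  refine (List.IsChain.iff_mem.1 hl).imp ?_
  rintro d d' ⟨hd, hd', hdd'⟩
  rw [hk d hd, hk d' hd', C.eq_iff_ne_of_adj d.adj, hdd']

lemma exists_color_of_isChain_alternating {l : List G.Dart} (hl : l.IsChain G.DartAdj)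
    (halt : (l.map Dart.edge).IsChain fun e f => (e ∈ M ↔ f ∉ M)) :
    ∃ k : Fin 2, ∀ d ∈ l, d.edge ∈ M ↔ C d.fst = k := by
  induction l with
  | nil => exact ⟨0, by simp⟩
  | cons d l ih =>
    cases l with
    | nil =>
      by_cases hd : d.edge ∈ M
      · exact ⟨C d.fst, by simp [hd]⟩
      · exact ⟨C d.snd, by simpa [hd] using C.valid d.adj⟩
    | cons d' l =>
      rw [List.isChain_cons_cons] at hl
      rw [List.map_cons, List.map_cons, List.isChain_cons_cons] at halt
      obtain ⟨k, hk⟩ := ih hl.2 halt.2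
      refine ⟨k, List.forall_mem_cons.2 ⟨?_, hk⟩⟩
      rw [halt.1, hk d' List.mem_cons_self, ← hl.1, C.eq_iff_ne_of_adj d.adj]

namespace Walk

variable {C M} {u w : V}

lemma exists_dart_of_mem_head?_edges {p : G.Walk u w} {e : Sym2 V} (he : e ∈ p.edges.head?) :
    ∃ d ∈ p.darts, d.fst = u ∧ d.edge = e := by
  cases p with
  | nil => simp at he
  | cons h p => exact ⟨⟨(_, _), h⟩, by simp_all⟩

lemma exists_dart_of_mem_getLast?_edges {p : G.Walk u w} {e : Sym2 V}
    (he : e ∈ p.edges.getLast?) : ∃ d ∈ p.darts, d.snd = w ∧ d.edge = e := by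
  obtain ⟨d, hd, hfst, rfl⟩ :=
    p.reverse.exists_dart_of_mem_head?_edges (by simpa [List.head?_reverse] using he)
  exact ⟨d.symm, by simpa using hd, hfst, d.edge_symm⟩

variable {k : Fin 2} {p q : G.Walk u w}

lemma head?_edges_mem_or_critical_of_darts_subset (hk : ∀ d ∈ p.darts, d.edge ∈ M ↔ C d.fst = k)
    (hqp : q.darts ⊆ p.darts) (hp : ∀ e ∈ p.edges.head?, e ∈ M ∨ CriticalVtx M u) :
    ∀ e ∈ q.edges.head?, e ∈ M ∨ CriticalVtx M u := by
  intro e he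
  obtain ⟨d, hd, hu, rfl⟩ := exists_dart_of_mem_head?_edges he
  obtain ⟨e', he'⟩ : ∃ e', e' ∈ p.edges.head? :=
    ⟨_, List.head?_eq_some_head (List.ne_nil_of_mem (List.mem_map_of_mem (hqp hd)))⟩
  obtain ⟨d', hd', hu', rfl⟩ := exists_dart_of_mem_head?_edges he'
  refine (hp _ he').imp_left fun h => ?_
  rwa [hk d (hqp hd), hu, ← hu', ← hk d' hd']

lemma getLast?_edges_mem_or_critical_of_darts_subset
    (hk : ∀ d ∈ p.darts, d.edge ∈ M ↔ C d.fst = k)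
    (hqp : q.darts ⊆ p.darts) (hp : ∀ e ∈ p.edges.getLast?, e ∈ M ∨ CriticalVtx M w) :
    ∀ e ∈ q.edges.getLast?, e ∈ M ∨ CriticalVtx M w := by
  intro e he
  obtain ⟨d, hd, hw, rfl⟩ := exists_dart_of_mem_getLast?_edges he
  obtain ⟨e', he'⟩ : ∃ e', e' ∈ p.edges.getLast? :=
    ⟨_, List.getLast?_eq_some_getLast (List.ne_nil_of_mem (List.mem_map_of_mem (hqp hd)))⟩
  obtain ⟨d', hd', hw', rfl⟩ := exists_dart_of_mem_getLast?_edges he'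
  refine (hp _ he').imp_left fun h => ?_
  rwa [hk d (hqp hd), C.eq_iff_ne_of_adj d.adj, hw, ← hw', ← C.eq_iff_ne_of_adj d'.adj,
    ← hk d' hd']

end Walk

end SimpleGraph

theorem exists_properly_alternating_path_general {V : Type*} (G : SimpleGraph V)
    (hbip : G.Colorable 2) (M : Set (Sym2 V))
    (v w : V) (p : G.Walk v w) (hp : ProperlyAlternating M p) :
    ∃ q : G.Walk v w, q.IsPath ∧ ProperlyAlternating M q := by
  classical
  obtain ⟨C⟩ := hbip
  obtain ⟨halt, hhead, hlast⟩ := hp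
  obtain ⟨k, hk⟩ :=
    SimpleGraph.exists_color_of_isChain_alternating C M p.isChain_dartAdj_darts halt
  have hsub := p.darts_bypass_subset_darts
  exact ⟨p.bypass, p.bypass_isPath,
    SimpleGraph.isChain_alternating_map_edge C M p.bypass.isChain_dartAdj_darts
      fun d hd => hk d (hsub hd),
    SimpleGraph.Walk.head?_edges_mem_or_critical_of_darts_subset hk hsub hhead,
    SimpleGraph.Walk.getLast?_edges_mem_or_critical_of_darts_subset hk hsub hlast⟩

/-- In a bipartite graph with a matching `M`, if there is a properly alternating
walk between two distinct vertices `v` and `w`, then there is a properly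
alternating non-self-intersecting path between `v` and `w`. -/
theorem exists_properly_alternating_path {V : Type*} (G : SimpleGraph V)
    (hbip : G.Colorable 2) (M : Set (Sym2 V)) (hM : IsMatchingSet G M)
    (v w : V) (hvw : v ≠ w) (p : G.Walk v w) (hp : ProperlyAlternating M p) :
    ∃ q : G.Walk v w, q.IsPath ∧ ProperlyAlternating M q :=
  exists_properly_alternating_path_general G hbip M v w p hp
end

section
/- Let (S,T) and (S',T') be disjoint well-ordered pairs of subsets of [n] that are not nested. Then the standard paths p_{S,T} and p_{S',T'} in the flip graph Γ_n are vertex-disjoint. -/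
/-- The set of vertices (full `[n]`-tuples, encoded as lists of blocks) of the
standard path `p_{S,T}` associated to a well-ordered pair `(S,T)`. The pair is
encoded by the ordering list `xs` of the elements of `T` (elements of `S` first)
together with `s = |S|`, so `S` is the set of the first `s` entries of `xs` and
`T` is the set of all entries. The path goes from `b_T = T|([n]\T)`, splitting
`S` into singletons, merging them back, splitting `T \ S` into singletons, and
finally merging them into the complement, ending at `b_S = S|([n]\S)`. -/
def pathVerts (n : ℕ) (xs : List (Fin n)) (s : ℕ) :
    Set (List (Finset (Fin n))) :=
  let T : Finset (Fin n) := xs.toFinset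
  let S : Finset (Fin n) := (xs.take s).toFinset
  let C : Finset (Fin n) := Finset.univ \ T
  let t : ℕ := xs.length
  { l | (∃ k ≤ s, l = ((xs.take k).map fun x => ({x} : Finset (Fin n))) ++
            [T \ (xs.take k).toFinset, C]) ∨
        (∃ j, j + 1 ≤ s ∧ l = ((xs.take j).map fun x => ({x} : Finset (Fin n))) ++
            [S \ (xs.take j).toFinset, T \ S, C]) ∨
        (∃ k, k + 1 ≤ t - s ∧ l = [S] ++
            (((xs.drop s).take k).map fun x => ({x} : Finset (Fin n))) ++
            [T \ (xs.take (s + k)).toFinset, C]) ∨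
        (∃ m ≤ t - s, l = [S] ++
            (((xs.drop s).take m).map fun x => ({x} : Finset (Fin n))) ++
            [Finset.univ \ (xs.take (s + m)).toFinset]) }

/-!
Every vertex of `p_{S,T}` either begins with the block `S` and has a last block whose complement
lies in `T`, or has last block `[n] \ T` and begins with a block contained in `S` or equal to `T`.
A common vertex of `p_{S,T}` and `p_{S',T'}` has one first and one last block, and comparing the
two descriptions forces one of `S, T` to equal one of `S', T'`, or one pair to nest in the other.
-/

/-- For a vertex of `p_{S,T}`, `H` is its first block and `U` the complement of its last block. -/
def PathEnds {α : Type*} [PartialOrder α] (S T H U : α) : Prop :=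
  U ≤ T ∧ (H = S ∨ U = T ∧ (H ≤ S ∨ H = T))

theorem not_pathEnds_of_not_nested {α : Type*} [PartialOrder α] {S T S' T' H U : α}
    (hST : S < T) (hST' : S' < T')
    (h1 : S ≠ S') (h2 : S ≠ T') (h3 : T ≠ S') (h4 : T ≠ T')
    (hn1 : ¬ (S < S' ∧ S' < T' ∧ T' < T)) (hn2 : ¬ (S' < S ∧ S < T ∧ T < T')) :
    ¬ (PathEnds S T H U ∧ PathEnds S' T' H U) := by
  rintro ⟨⟨hUT, hH | ⟨hUT, hHS | hHT⟩⟩, ⟨hUT', hH' | ⟨hUT', hHS' | hHT'⟩⟩⟩ <;>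
    subst_vars <;> try order
  -- the two remaining configurations are the nested ones
  · exact hn1 ⟨hHS'.lt_of_ne h1, hST', hUT.lt_of_ne h4.symm⟩
  · exact hn2 ⟨hHS.lt_of_ne h1.symm, hST, hUT'.lt_of_ne h4⟩

theorem List.toFinset_take_subset {α : Type*} [DecidableEq α] (xs : List α) (s : ℕ) :
    (xs.take s).toFinset ⊆ xs.toFinset :=
  fun _ hx => List.mem_toFinset.2 (List.take_subset s xs (List.mem_toFinset.1 hx))

theorem List.toFinset_take_ssubset {α : Type*} [DecidableEq α] {xs : List α} (hxs : xs.Nodup)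
    {s : ℕ} (hs : s < xs.length) : (xs.take s).toFinset ⊂ xs.toFinset := by
  have hcard : (xs.take s).toFinset.card < xs.toFinset.card := calc
    _ ≤ (xs.take s).length := List.toFinset_card_le _
    _ < xs.length := (List.length_take_le s xs).trans_lt hs
    _ = _ := (List.toFinset_card_of_nodup hxs).symm
  exact Finset.ssubset_iff_subset_ne.2
    ⟨List.toFinset_take_subset xs s, fun h => hcard.ne (congrArg Finset.card h)⟩

theorem pathEnds_of_mem_pathVerts {n : ℕ} {xs : List (Fin n)} {s : ℕ} (hs : 1 ≤ s)
    {l : List (Finset (Fin n))} (hl : l ∈ pathVerts n xs s) :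
    ∃ H L, l.head? = some H ∧ l.getLast? = some L ∧
      PathEnds (xs.take s).toFinset xs.toFinset H (Finset.univ \ L) := by
  simp only [pathVerts, Set.mem_ofPred_eq] at hl
  rcases hl with ⟨k, hk, rfl⟩ | ⟨j, hj, rfl⟩ | ⟨k, hk, rfl⟩ | ⟨m, hm, rfl⟩
  · rcases k with _ | k
    · refine ⟨xs.toFinset, Finset.univ \ xs.toFinset, by simp, by simp, ?_⟩
      simp [PathEnds]
    · rcases xs with _ | ⟨x, xs⟩
      · refine ⟨∅, Finset.univ, by simp, by simp, ?_⟩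
        simp [PathEnds]
      refine ⟨{x}, Finset.univ \ (x :: xs).toFinset, by simp, by simp [List.getLast?_cons], ?_⟩
      simp [PathEnds, List.take_cons (by omega : 0 < s)]
  · rcases j with _ | j
    · refine ⟨(xs.take s).toFinset, Finset.univ \ xs.toFinset, by simp,
        by simp [List.getLast?_cons], ?_⟩
      simp [PathEnds]
    · rcases xs with _ | ⟨x, xs⟩
      · refine ⟨∅, Finset.univ, by simp, by simp [List.getLast?_cons], ?_⟩
        simp [PathEnds]
      refine ⟨{x}, Finset.univ \ (x :: xs).toFinset, by simp, by simp [List.getLast?_cons], ?_⟩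
      simp [PathEnds, List.take_cons (by omega : 0 < s)]
  · refine ⟨(xs.take s).toFinset, Finset.univ \ xs.toFinset, by simp,
      by simp [List.getLast?_cons], ?_⟩
    simp [PathEnds]
  · refine ⟨(xs.take s).toFinset, Finset.univ \ (xs.take (s + m)).toFinset, by simp,
      by simp [List.getLast?_cons], ?_⟩
    simpa [PathEnds] using List.toFinset_take_subset xs (s + m)

theorem standard_paths_disjoint_general (n : ℕ)
    (xs : List (Fin n)) (s : ℕ) (hxs : xs.Nodup)
    (hs1 : 1 ≤ s) (hs2 : s < xs.length)
    (ys : List (Fin n)) (s' : ℕ) (hys : ys.Nodup)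
    (hs1' : 1 ≤ s') (hs2' : s' < ys.length)
    -- the two well-ordered pairs of sets
    (S T S' T' : Finset (Fin n))
    (hS : S = (xs.take s).toFinset) (hT : T = xs.toFinset)
    (hS' : S' = (ys.take s').toFinset) (hT' : T' = ys.toFinset)
    -- disjointness: {S,T} ∩ {S',T'} = ∅
    (h1 : S ≠ S') (h2 : S ≠ T') (h3 : T ≠ S') (h4 : T ≠ T')
    -- not nested: neither S ⊂ S' ⊂ T' ⊂ T nor S' ⊂ S ⊂ T ⊂ T'
    (hn1 : ¬ (S ⊂ S' ∧ S' ⊂ T' ∧ T' ⊂ T))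
    (hn2 : ¬ (S' ⊂ S ∧ S ⊂ T ∧ T ⊂ T')) :
    pathVerts n xs s ∩ pathVerts n ys s' = ∅ := by
  subst hS hT hS' hT'
  refine Set.eq_empty_iff_forall_notMem.2 fun l ⟨hl, hl'⟩ => ?_
  obtain ⟨H, L, hH, hL, hends⟩ := pathEnds_of_mem_pathVerts hs1 hl
  obtain ⟨H', L', hH', hL', hends'⟩ := pathEnds_of_mem_pathVerts hs1' hl'
  obtain rfl : H = H' := Option.some.inj (hH.symm.trans hH')
  obtain rfl : L = L' := Option.some.inj (hL.symm.trans hL')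
  exact not_pathEnds_of_not_nested (List.toFinset_take_ssubset hxs hs2)
    (List.toFinset_take_ssubset hys hs2') h1 h2 h3 h4 hn1 hn2 ⟨hends, hends'⟩

/-- If `(S,T)` and `(S',T')` are disjoint well-ordered pairs of subsets of `[n]`
which are not nested, then the standard paths `p_{S,T}` and `p_{S',T'}` in the
flip graph `Γ_n` are vertex-disjoint. -/
theorem standard_paths_disjoint (n : ℕ)
    (xs : List (Fin n)) (s : ℕ) (hxs : xs.Nodup)
    (hs1 : 1 ≤ s) (hs2 : s < xs.length) (ht : xs.length < n)
    (ys : List (Fin n)) (s' : ℕ) (hys : ys.Nodup)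
    (hs1' : 1 ≤ s') (hs2' : s' < ys.length) (ht' : ys.length < n)
    -- the two well-ordered pairs of sets
    (S T S' T' : Finset (Fin n))
    (hS : S = (xs.take s).toFinset) (hT : T = xs.toFinset)
    (hS' : S' = (ys.take s').toFinset) (hT' : T' = ys.toFinset)
    -- disjointness: {S,T} ∩ {S',T'} = ∅
    (h1 : S ≠ S') (h2 : S ≠ T') (h3 : T ≠ S') (h4 : T ≠ T')
    -- not nested: neither S ⊂ S' ⊂ T' ⊂ T nor S' ⊂ S ⊂ T ⊂ T'
    (hn1 : ¬ (S ⊂ S' ∧ S' ⊂ T' ∧ T' ⊂ T))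
    (hn2 : ¬ (S' ⊂ S ∧ S ⊂ T ∧ T ⊂ T')) :
    pathVerts n xs s ∩ pathVerts n ys s' = ∅ :=
  standard_paths_disjoint_general n xs s hxs hs1 hs2 ys s' hys hs1' hs2' S T S' T' hS hT hS' hT' h1
    h2 h3 h4 hn1 hn2
end

section
/- Given two disjoint proper families Σ and Λ of subsets of [n] with a comparable matching φ: Σ → Λ, there exists a non-nested comparable matching ψ: Σ → Λ. -/
/-!
Choose a comparable matching `ψ` minimising `∑ 2 ^ #(S ∆ ψ S)`. If the pair `(A, B)` of `S` strictly
contains the pair `(A', B')` of `T`, exchange the images of `S` and `T`. Each new pair joins an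
endpoint of `{A, B}` to one of `{A', B'}`, so it is comparable with gap `x < #(B \ A)`, and
`2 ^ x + 2 ^ y ≤ 2 ^ #(B \ A) < 2 ^ #(B \ A) + 2 ^ #(B' \ A')`.
-/

/-- The well-ordered pair (ordered by inclusion) associated to `S` under a
comparable matching `ψ`. -/
def wop {n : ℕ} (ψ : Finset (Fin n) → Finset (Fin n)) (S : Finset (Fin n)) :
    Finset (Fin n) × Finset (Fin n) :=
  if S ⊆ ψ S then (S, ψ S) else (ψ S, S)

/-- Two inclusion-ordered pairs `(A,B)` and `(A',B')` are nested if
`A ⊂ A' ⊂ B' ⊂ B` or `A' ⊂ A ⊂ B ⊂ B'`. -/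
def NestedPairs {n : ℕ} (p q : Finset (Fin n) × Finset (Fin n)) : Prop :=
  (p.1 ⊂ q.1 ∧ q.1 ⊂ q.2 ∧ q.2 ⊂ p.2) ∨ (q.1 ⊂ p.1 ∧ p.1 ⊂ p.2 ∧ p.2 ⊂ q.2)

open Finset Set
open scoped symmDiff

namespace Finset

variable {α : Type*} {A B X Y : Finset α}

theorem ssubset_or_ssuperset_of_ssubset_of_ssubset (hAY : A ⊂ Y) (hYB : Y ⊂ B)
    (hX : X = A ∨ X = B) : X ⊂ Y ∨ Y ⊂ X := by
  rcases hX with rfl | rfl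
  exacts [.inl hAY, .inr hYB]

variable [DecidableEq α]

theorem card_symmDiff_add_min (h : X ⊆ Y ∨ Y ⊆ X) : #(X ∆ Y) + min #X #Y = max #X #Y := by
  rcases h with h | h
  · rw [symmDiff_of_le h, card_sdiff_of_subset h]
    have := card_le_card h
    omega
  · rw [symmDiff_of_ge h, card_sdiff_of_subset h]
    have := card_le_card h
    omega

theorem card_symmDiff_lt_of_ssubset_of_ssubset (hAY : A ⊂ Y) (hYB : Y ⊂ B)
    (hX : X = A ∨ X = B) : #(X ∆ Y) < #(A ∆ B) := by
  have hXY := card_symmDiff_add_min <|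
    (ssubset_or_ssuperset_of_ssubset_of_ssubset hAY hYB hX).imp subset_of_ssubset subset_of_ssubset
  have hAB := card_symmDiff_add_min (.inl (hAY.trans hYB).subset)
  have hA := card_lt_card hAY
  have hB := card_lt_card hYB
  have hX' : #X = #A ∨ #X = #B := hX.imp (congrArg card) (congrArg card)
  omega

theorem sum_lt_sum_of_eq_off_pair {ι M : Type*} [DecidableEq ι] [AddCommMonoid M] [PartialOrder M]
    [IsOrderedCancelAddMonoid M] {s : Finset ι} {f g : ι → M} {a b : ι} (ha : a ∈ s) (hb : b ∈ s)
    (hab : a ≠ b) (hfg : ∀ x ∈ s, x ≠ a → x ≠ b → f x = g x) (h : f a + f b < g a + g b) :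
    ∑ x ∈ s, f x < ∑ x ∈ s, g x := by
  have hpair : {a, b} ⊆ s := insert_subset ha (singleton_subset_iff.2 hb)
  rw [← sum_sdiff hpair, ← sum_sdiff (f := g) hpair, sum_pair hab, sum_pair hab]
  refine add_lt_add_of_le_of_lt (sum_congr rfl fun x hx => ?_).le h
  simp only [mem_sdiff, mem_insert, mem_singleton, not_or] at hx
  exact hfg x hx.1 hx.2.1 hx.2.2

end Finset

theorem two_pow_add_two_pow_lt {x y D : ℕ} (hx : x < D) (hy : y < D) (d : ℕ) :
    2 ^ x + 2 ^ y < 2 ^ D + 2 ^ d := by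
  obtain ⟨D, rfl⟩ : ∃ D', D = D' + 1 := ⟨D - 1, by omega⟩
  have := Nat.pow_le_pow_right two_pos (Nat.le_of_lt_succ hx)
  have := Nat.pow_le_pow_right two_pos (Nat.le_of_lt_succ hy)
  have := Nat.two_pow_pos d
  rw [pow_succ]
  omega

section Weight

variable {α : Type*} [DecidableEq α]

def symmDiffWeight (s : Finset (Finset α)) (ψ : Finset α → Finset α) : ℕ :=
  ∑ S ∈ s, 2 ^ #(S ∆ ψ S)

theorem symmDiffWeight_comp_swap_lt {s : Finset (Finset α)} {ψ : Finset α → Finset α}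
    {S T : Finset α} (hS : S ∈ s) (hT : T ∈ s) (hST : S ≠ T)
    (hSψT : #(S ∆ ψ T) < #(S ∆ ψ S)) (hTψS : #(T ∆ ψ S) < #(S ∆ ψ S)) :
    symmDiffWeight s (ψ ∘ Equiv.swap S T) < symmDiffWeight s ψ := by
  refine sum_lt_sum_of_eq_off_pair hS hT hST (fun U _ hUS hUT => ?_) ?_
  · simp [Equiv.swap_apply_of_ne_of_ne hUS hUT]
  · simpa using two_pow_add_two_pow_lt hSψT hTψS _

end Weight

section Wop

variable {n : ℕ} (ψ : Finset (Fin n) → Finset (Fin n)) (S : Finset (Fin n))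

theorem eq_wop_fst_or_eq_wop_snd : S = (wop ψ S).1 ∨ S = (wop ψ S).2 := by
  unfold wop; split_ifs <;> simp

theorem apply_eq_wop_fst_or_eq_wop_snd : ψ S = (wop ψ S).1 ∨ ψ S = (wop ψ S).2 := by
  unfold wop; split_ifs <;> simp

theorem card_symmDiff_wop : #((wop ψ S).1 ∆ (wop ψ S).2) = #(S ∆ ψ S) := by
  unfold wop; split_ifs <;> simp [symmDiff_comm]

end Wop

theorem comparable_and_symmDiffWeight_lt_of_nested {n : ℕ} {s : Finset (Finset (Fin n))}
    {ψ : Finset (Fin n) → Finset (Fin n)} {S T : Finset (Fin n)} (hS : S ∈ s) (hT : T ∈ s)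
    (hnest : (wop ψ S).1 ⊂ (wop ψ T).1 ∧ (wop ψ T).1 ⊂ (wop ψ T).2 ∧ (wop ψ T).2 ⊂ (wop ψ S).2) :
    (S ⊂ ψ T ∨ ψ T ⊂ S) ∧ (T ⊂ ψ S ∨ ψ S ⊂ T) ∧
      symmDiffWeight s (ψ ∘ Equiv.swap S T) < symmDiffWeight s ψ := by
  obtain ⟨h₁, h₂, h₃⟩ := hnest
  have between {Y} (hY : Y = (wop ψ T).1 ∨ Y = (wop ψ T).2) :
      (wop ψ S).1 ⊂ Y ∧ Y ⊂ (wop ψ S).2 := by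
    rcases hY with rfl | rfl
    exacts [⟨h₁, h₂.trans h₃⟩, ⟨h₁.trans h₂, h₃⟩]
  obtain ⟨hAT, hTB⟩ := between (eq_wop_fst_or_eq_wop_snd ψ T)
  obtain ⟨hAψT, hψTB⟩ := between (apply_eq_wop_fst_or_eq_wop_snd ψ T)
  have hS' := eq_wop_fst_or_eq_wop_snd ψ S
  have hψS := apply_eq_wop_fst_or_eq_wop_snd ψ S
  have hST : S ≠ T := by
    rintro rfl
    exact ssubset_irrefl _ h₁
  refine ⟨ssubset_or_ssuperset_of_ssubset_of_ssubset hAψT hψTB hS',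
    (ssubset_or_ssuperset_of_ssubset_of_ssubset hAT hTB hψS).symm,
    symmDiffWeight_comp_swap_lt hS hT hST ?_ ?_⟩
  · rw [← card_symmDiff_wop]
    exact card_symmDiff_lt_of_ssubset_of_ssubset hAψT hψTB hS'
  · rw [← card_symmDiff_wop, symmDiff_comm]
    exact card_symmDiff_lt_of_ssubset_of_ssubset hAT hTB hψS

theorem exists_non_nested_comparable_matching_general (n : ℕ)
    (Sig Lam : Set (Finset (Fin n)))
    (φ : Finset (Fin n) → Finset (Fin n)) (hφ : Set.BijOn φ Sig Lam)
    (hcomp : ∀ S ∈ Sig, S ⊂ φ S ∨ φ S ⊂ S) :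
    ∃ ψ : Finset (Fin n) → Finset (Fin n),
      Set.BijOn ψ Sig Lam ∧ (∀ S ∈ Sig, S ⊂ ψ S ∨ ψ S ⊂ S) ∧
      ∀ S ∈ Sig, ∀ T ∈ Sig, S ≠ T → ¬ NestedPairs (wop ψ S) (wop ψ T) := by
  obtain ⟨s, rfl⟩ := Sig.toFinite.exists_finset_coe
  obtain ⟨ψ, ⟨hbij, hψcomp⟩, hmin⟩ := (measure (symmDiffWeight s)).wf.has_min
    {ψ | BijOn ψ s Lam ∧ ∀ S ∈ s, S ⊂ ψ S ∨ ψ S ⊂ S} ⟨φ, hφ, hcomp⟩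
  have swap_not_better {S T} (hS : S ∈ s) (hT : T ∈ s)
      (hnest : (wop ψ S).1 ⊂ (wop ψ T).1 ∧ (wop ψ T).1 ⊂ (wop ψ T).2 ∧
        (wop ψ T).2 ⊂ (wop ψ S).2) : False := by
    obtain ⟨hSψT, hTψS, hlt⟩ := comparable_and_symmDiffWeight_lt_of_nested hS hT hnest
    refine hmin _ ⟨hbij.comp (Equiv.bijOn_swap hS hT), fun U hU => ?_⟩ hlt
    rcases eq_or_ne U S with rfl | hUS
    · simpa using hSψT
    rcases eq_or_ne U T with rfl | hUT
    · simpa using hTψS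
    simpa [Equiv.swap_apply_of_ne_of_ne hUS hUT] using hψcomp U hU
  refine ⟨ψ, hbij, hψcomp, fun S hS T hT _ hnest => ?_⟩
  rcases hnest with h | h
  exacts [swap_not_better hS hT h, swap_not_better hT hS h]

/-- Given two disjoint proper families `Σ` and `Λ` of subsets of `[n]` with a
comparable matching `φ : Σ → Λ`, there exists a non-nested comparable matching
`ψ : Σ → Λ`. -/
theorem exists_non_nested_comparable_matching (n : ℕ)
    (Sig Lam : Set (Finset (Fin n)))
    (hSig : ∀ S ∈ Sig, S ≠ ∅ ∧ S ≠ Finset.univ)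
    (hLam : ∀ S ∈ Lam, S ≠ ∅ ∧ S ≠ Finset.univ)
    (hdisj : Disjoint Sig Lam)
    (φ : Finset (Fin n) → Finset (Fin n)) (hφ : Set.BijOn φ Sig Lam)
    (hcomp : ∀ S ∈ Sig, S ⊂ φ S ∨ φ S ⊂ S) :
    ∃ ψ : Finset (Fin n) → Finset (Fin n),
      Set.BijOn ψ Sig Lam ∧ (∀ S ∈ Sig, S ⊂ ψ S ∨ ψ S ⊂ S) ∧
      ∀ S ∈ Sig, ∀ T ∈ Sig, S ≠ T → ¬ NestedPairs (wop ψ S) (wop ψ T) :=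
  exists_non_nested_comparable_matching_general n Sig Lam φ hφ hcomp
end

section
/- For arbitrary n and any tuple α = (α_1,...,α_t) of 0's and 1's with n ≥ t, the power set 2^{[n]} decomposes as the disjoint union of the single set with support vector [α]^∞_{≤n} and, for i = 1,...,t, the families ⟨\barα_i α_{i+1} ... α_t [α]^*⟩ of subsets whose support vector ends with the string \barα_i α_{i+1}...α_t followed by some number (possibly zero) of copies of α. -/
/-- `k` concatenated copies of the binary string `γ`. -/
def reps (γ : List Bool) (k : ℕ) : List Bool := (List.replicate k γ).flatten

/-- The support vector `v` ends (on the right) with the string `β`. -/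
def EndsWith (v β : List Bool) : Prop := ∃ γ : List Bool, v = γ ++ β

/-! Read support vectors from the right, i.e. reverse them, and compare a reversed vector `w`
with the infinite periodic word `f` of period `α` reversed. Either `w` is the length-`n` prefix
of `f`, which is the vector `[α]^∞_{≤n}`, or there is a unique first position `m` where `w`
differs from `f`. Reversed, the family `⟨ᾱ_i α_{i+1} ⋯ α_t [α]^k⟩` is exactly the set of
vectors whose first mismatch sits at position `k t + (t - 1 - i)`; as `i` and `k` vary, these
positions enumerate every `m` exactly once, with `i` determined by `m mod t`. -/

open List

section FirstMismatch

variable {σ : Type*}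

def FirstMismatch (f : ℕ → σ) (w : List σ) (m : ℕ) : Prop :=
  ∃ h : m < w.length, w[m] ≠ f m ∧ ∀ e (he : e < m), w[e]'(he.trans h) = f e

theorem FirstMismatch.unique {f : ℕ → σ} {w : List σ} {m m' : ℕ} (h : FirstMismatch f w m)
    (h' : FirstMismatch f w m') : m = m' := by
  obtain ⟨_, hne, hagree⟩ := h
  obtain ⟨_, hne', hagree'⟩ := h'
  by_contra hmm
  rcases Nat.lt_or_gt_of_ne hmm with hlt | hlt
  · exact hne (hagree' m hlt)
  · exact hne' (hagree m' hlt)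

theorem not_firstMismatch_map_range (f : ℕ → σ) (n m : ℕ) :
    ¬ FirstMismatch f ((range n).map f) m := by
  rintro ⟨_, hne, -⟩
  simp at hne

theorem eq_map_range_or_exists_firstMismatch (f : ℕ → σ) (w : List σ) :
    w = (range w.length).map f ∨ ∃ m, FirstMismatch f w m := by
  classical
  by_cases hex : ∃ m, ∃ h : m < w.length, w[m] ≠ f m
  · right
    obtain ⟨h, hne⟩ := Nat.find_spec hex
    exact ⟨Nat.find hex, h, hne, fun e he => not_not.1 fun hne' =>
      Nat.find_min hex he ⟨he.trans h, hne'⟩⟩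
  · left
    push Not at hex
    exact ext_getElem (by simp) fun j h _ => by simp [hex j h]

theorem firstMismatch_iff_prefix {f : ℕ → Bool} {w : List Bool} {m : ℕ} :
    FirstMismatch f w m ↔ (range m).map f ++ [!f m] <+: w := by
  rw [prefix_iff_getElem]
  simp only [length_append, length_map, length_range, length_singleton, Nat.succ_le_iff]
  constructor
  · rintro ⟨hm, hne, hagree⟩
    refine ⟨hm, fun i hi => ?_⟩
    rcases Nat.lt_or_ge i m with hi' | hi'
    · simp [getElem_append_left, hi', hagree i hi']
    · obtain rfl : i = m := by omega
      simpa [Bool.eq_not, eq_comm] using hne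
  · rintro ⟨hm, hagree⟩
    refine ⟨hm, ?_, fun e he => ?_⟩
    · simpa [Bool.eq_not, eq_comm] using hagree m (by simp)
    · simpa [getElem_append_left, he] using (hagree e (by simp; omega)).symm

end FirstMismatch

theorem reps_succ (γ : List Bool) (k : ℕ) : reps γ (k + 1) = γ ++ reps γ k := by
  simp [reps, replicate_succ]

theorem length_reps (γ : List Bool) (k : ℕ) : (reps γ k).length = k * γ.length := by
  simp [reps]

theorem reverse_reps (γ : List Bool) (k : ℕ) : (reps γ k).reverse = reps γ.reverse k := by
  simp [reps, reverse_flatten]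

def periodicWord (β : List Bool) (j : ℕ) : Bool := β.getD (j % β.length) false

theorem map_range_periodicWord_of_le {β : List Bool} {r : ℕ} (h : r ≤ β.length) :
    (range r).map (periodicWord β) = β.take r :=
  ext_getElem (by simp [h]) fun j hj _ => by
    have hjβ : j < β.length := by rw [length_map, length_range] at hj; omega
    simp [periodicWord, Nat.mod_eq_of_lt hjβ, hjβ]

theorem map_range_periodicWord (β : List Bool) (k : ℕ) {r : ℕ} (h : r ≤ β.length) :
    (range (k * β.length + r)).map (periodicWord β) = reps β k ++ β.take r := by
  induction k with
  | zero => simpa [reps] using map_range_periodicWord_of_le h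
  | succ k ih =>
    have hshift : (fun j => periodicWord β (β.length + j)) = periodicWord β := by
      funext j; simp [periodicWord]
    rw [Nat.succ_mul, Nat.add_comm _ β.length, Nat.add_assoc, range_add, map_append, map_map,
      Function.comp_def, hshift, ih, map_range_periodicWord_of_le le_rfl, take_length,
      reps_succ, append_assoc]

theorem reverse_drop_reps {α : List Bool} (hα : α ≠ []) (n : ℕ) :
    ((reps α n).drop (n * α.length - n)).reverse = (range n).map (periodicWord α.reverse) := by
  have hn : n ≤ n * α.length := Nat.le_mul_of_pos_right n (length_pos_iff.mpr hα)
  have hreps := map_range_periodicWord α.reverse n (Nat.zero_le _)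
  rw [add_zero, take_zero, append_nil, length_reverse] at hreps
  rw [reverse_drop, length_reps, reverse_reps, ← hreps, ← map_take, take_range]
  congr 2
  omega

/-- The string `ᾱ_{i+1} α_{i+2} ⋯ α_t [α]^k`, with `i` counted from `0`. -/
def mismatchBlock (α : List Bool) (i k : ℕ) : List Bool :=
  [!(α.getD i false)] ++ α.drop (i + 1) ++ reps α k

theorem reverse_mismatchBlock {α : List Bool} {i : ℕ} (hi : i < α.length) (k : ℕ) :
    (mismatchBlock α i k).reverse =
      (range (k * α.length + (α.length - 1 - i))).map (periodicWord α.reverse) ++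
        [!periodicWord α.reverse (k * α.length + (α.length - 1 - i))] := by
  have hr : α.length - 1 - i < α.length := by omega
  have hbit : periodicWord α.reverse (k * α.length + (α.length - 1 - i)) = α.getD i false := by
    simp only [periodicWord, length_reverse, Nat.mul_add_mod_of_lt hr, getD_eq_getElem?_getD, hr,
      getElem?_pos, getElem_reverse, Option.getD_some, hi]
    congr 1
    omega
  have hprefix := map_range_periodicWord α.reverse k (r := α.length - 1 - i) (by simp; omega)
  rw [length_reverse] at hprefix
  rw [mismatchBlock, hprefix, hbit, reverse_append, reverse_append, reverse_singleton,
    reverse_drop, reverse_reps, Nat.sub_sub, Nat.add_comm 1 i, append_assoc]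

theorem endsWith_iff_isSuffix {v β : List Bool} : EndsWith v β ↔ β <:+ v :=
  exists_congr fun _ => eq_comm

theorem endsWith_mismatchBlock_iff {α : List Bool} {i : ℕ} (hi : i < α.length) (k : ℕ)
    (v : List Bool) :
    EndsWith v (mismatchBlock α i k) ↔
      FirstMismatch (periodicWord α.reverse) v.reverse (k * α.length + (α.length - 1 - i)) := by
  rw [firstMismatch_iff_prefix, ← reverse_mismatchBlock hi, reverse_prefix, endsWith_iff_isSuffix]

theorem Nat.exists_mul_add_iff {p : ℕ → Prop} {t r : ℕ} (hr : r < t) :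
    (∃ k, p (k * t + r)) ↔ ∃ m, p m ∧ m % t = r := by
  constructor
  · rintro ⟨k, hk⟩
    exact ⟨_, hk, by rw [Nat.mul_comm, Nat.mul_add_mod, Nat.mod_eq_of_lt hr]⟩
  · rintro ⟨m, hm, rfl⟩
    exact ⟨m / t, by rwa [Nat.div_add_mod']⟩

theorem power_set_decomposition_general (n : ℕ) (α : List Bool) (hα : α ≠ [])
    (v : List Bool) (hv : v.length = n) :
    let trunc : List Bool := (reps α n).drop (n * α.length - n)
    let P : ℕ → Prop := fun i =>
      ∃ k, EndsWith v ([!(α.getD i false)] ++ α.drop (i + 1) ++ reps α k)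
    (v = trunc ∨ ∃ i < α.length, P i) ∧
    (v = trunc → ∀ i < α.length, ¬ P i) ∧
    (∀ i < α.length, ∀ j < α.length, P i → P j → i = j) := by
  intro trunc P
  set t := α.length
  set f := periodicWord α.reverse
  have ht : 0 < t := length_pos_iff.mpr hα
  have htrunc : v = trunc ↔ v.reverse = (range n).map f := by
    rw [← reverse_inj, reverse_drop_reps hα]
  have hP : ∀ i < t, P i ↔ ∃ m, FirstMismatch f v.reverse m ∧ m % t = t - 1 - i := fun i hi =>
    (exists_congr fun k => endsWith_mismatchBlock_iff hi k v).trans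
      (Nat.exists_mul_add_iff (by omega))
  refine ⟨?_, ?_, ?_⟩
  · rcases eq_map_range_or_exists_firstMismatch f v.reverse with h | ⟨m, hm⟩
    · left
      rwa [htrunc, ← hv, ← length_reverse]
    · right
      have hmt := Nat.mod_lt m ht
      exact ⟨t - 1 - m % t, by omega, (hP _ (by omega)).2 ⟨m, hm, by omega⟩⟩
  · intro h i hi hPi
    obtain ⟨m, hm, -⟩ := (hP i hi).1 hPi
    rw [htrunc.1 h] at hm
    exact not_firstMismatch_map_range f n m hm
  · intro i hi j hj hPi hPj
    obtain ⟨m, hm, hmi⟩ := (hP i hi).1 hPi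
    obtain ⟨m', hm', hmj⟩ := (hP j hj).1 hPj
    rw [hm.unique hm'] at hmi
    omega

/-- For any tuple `α = (α_1,...,α_t)` of bits with `1 ≤ t ≤ n`, the set of
support vectors of length `n` decomposes as the disjoint union of the single
vector `[α]^∞_{≤n}` (the right-aligned truncation of infinitely many copies of
`α`) and, for `i = 1,...,t`, the families of vectors ending with
`¬α_i, α_{i+1},...,α_t` followed by some number of copies of `α`. -/
theorem power_set_decomposition (n : ℕ) (α : List Bool) (hα : α ≠ [])
    (hlen : α.length ≤ n) (v : List Bool) (hv : v.length = n) :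
    let trunc : List Bool := (reps α n).drop (n * α.length - n)
    let P : ℕ → Prop := fun i =>
      ∃ k, EndsWith v ([!(α.getD i false)] ++ α.drop (i + 1) ++ reps α k)
    (v = trunc ∨ ∃ i < α.length, P i) ∧
    (v = trunc → ∀ i < α.length, ¬ P i) ∧
    (∀ i < α.length, ∀ j < α.length, P i → P j → i = j) :=
  power_set_decomposition_general n α hα v hv
end

section
/- For every p ≥ 2, the family ⟨0[01]^*⟩ of subsets of [2p] decomposes as the disjoint union ⟨10[01]^*⟩ ⊔ ⟨1[10]^*00[01]^*⟩ ⊔ ⟨00[10]^*00[01]^*⟩ ⊔ {[10]^k 00 [01]^{p-k-1} : 0 ≤ k ≤ p-1}. -/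
/-- The four alternatives are pairwise disjoint. -/
def PairwiseDisjoint4 (A B C D : Prop) : Prop :=
  ¬(A ∧ B) ∧ ¬(A ∧ C) ∧ ¬(A ∧ D) ∧ ¬(B ∧ C) ∧ ¬(B ∧ D) ∧ ¬(C ∧ D)

/-!
Reverse the support vector, so that the patterns become prefixes. Every word of `⟨0[01]^*⟩`
then starts with `(10)^k 0`; the next letter is `1` (family `⟨10[01]^*⟩`) or `0`. In the
latter case strip the maximal run `(01)^m` that follows `(10)^k 00`: what remains has even
length and does not start with `01`, so it is empty (the exceptional words), starts with `1`
(family `⟨1[10]^*00[01]^*⟩`) or starts with `00` (family `⟨00[10]^*00[01]^*⟩`).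
Disjointness holds because a run `(10)^k` followed by `0` is determined by the word, and
likewise for a run `(01)^m` followed by `1`, `00` or the end of the word.
-/

namespace Decomposition

lemma reps_zero (γ : List Bool) : reps γ 0 = [] := rfl

lemma reps_succ (γ : List Bool) (k : ℕ) : reps γ (k + 1) = γ ++ reps γ k := by
  simp [reps, List.replicate_succ]

lemma reps_reverse (γ : List Bool) (k : ℕ) : (reps γ k).reverse = reps γ.reverse k := by
  simp [reps, List.reverse_flatten]

lemma reps_length (γ : List Bool) (k : ℕ) : (reps γ k).length = k * γ.length := by
  simp [reps]

theorem reps_append_prefix_cancel {γ x y : List Bool} {k k' : ℕ}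
    (hxγ : ¬ x <+: γ) (hγx : ¬ γ <+: x) (hγy : ¬ γ <+: y)
    (h : reps γ k ++ x <+: reps γ k' ++ y) : k = k' ∧ x <+: y := by
  induction k generalizing k' with
  | zero =>
    cases k' with
    | zero => simpa [reps_zero] using h
    | succ k' =>
      rw [reps_zero, List.nil_append, reps_succ, List.append_assoc] at h
      have := List.prefix_or_prefix_of_prefix h (List.prefix_append γ _)
      tauto
  | succ k ih =>
    cases k' with
    | zero =>
      rw [reps_succ, reps_zero, List.nil_append, List.append_assoc] at h
      exact absurd ((List.prefix_append γ _).trans h) hγy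
    | succ k' =>
      rw [reps_succ, reps_succ, List.append_assoc, List.append_assoc,
        List.prefix_append_right_inj] at h
      obtain ⟨rfl, hxy⟩ := ih h
      exact ⟨rfl, hxy⟩

theorem exists_eq_reps_append_not_prefix {γ : List Bool} (hγ : γ ≠ []) (s : List Bool) :
    ∃ k t, s = reps γ k ++ t ∧ ¬ γ <+: t := by
  by_cases hs : γ <+: s
  · obtain ⟨s', rfl⟩ := hs
    have : s'.length < (γ ++ s').length := by
      simpa using List.length_pos_of_ne_nil hγ
    obtain ⟨k, t, rfl, ht⟩ := exists_eq_reps_append_not_prefix hγ s'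
    exact ⟨k + 1, t, by rw [reps_succ, List.append_assoc], ht⟩
  · exact ⟨0, s, rfl, hs⟩
termination_by s.length

lemma endsWith_iff_reverse_prefix (v β : List Bool) : EndsWith v β ↔ β.reverse <+: v.reverse := by
  constructor
  · rintro ⟨γ, rfl⟩
    exact ⟨γ.reverse, by rw [List.reverse_append]⟩
  · rintro ⟨t, ht⟩
    exact ⟨t.reverse, by simpa using congrArg List.reverse ht.symm⟩

/-! `Fam0 v.reverse` says that `v ∈ ⟨0[01]^*⟩`, `Fam1_00 v.reverse` that `v ∈ ⟨1[10]^*00[01]^*⟩`,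
and so on; `FamExact` holds for the reversals of the words `[10]^k 00 [01]^m`. -/

def Fam0 (r : List Bool) : Prop := ∃ k, reps [true, false] k ++ [false] <+: r

def Fam10 (r : List Bool) : Prop := ∃ k, reps [true, false] k ++ [false, true] <+: r

def Fam1_00 (r : List Bool) : Prop :=
  ∃ m k, reps [true, false] k ++ false :: false :: (reps [false, true] m ++ [true]) <+: r

def Fam00_00 (r : List Bool) : Prop :=
  ∃ m k, reps [true, false] k ++ false :: false :: (reps [false, true] m ++ [false, false]) <+: r

def FamExact (r : List Bool) : Prop :=
  ∃ m k, r = reps [true, false] k ++ false :: false :: reps [false, true] m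

theorem fam0_split {r : List Bool} (he : Even r.length) (h : Fam0 r) :
    Fam10 r ∨ Fam1_00 r ∨ Fam00_00 r ∨ FamExact r := by
  obtain ⟨k, Y, rfl⟩ := h
  simp only [List.append_assoc, List.cons_append, List.nil_append] at he ⊢
  rcases Y with _ | ⟨_ | _, Y⟩
  · obtain ⟨j, hj⟩ := he; simp [reps_length] at hj; omega
  · obtain ⟨m, u, rfl, hu⟩ := exists_eq_reps_append_not_prefix (γ := [false, true]) (by simp) Y
    match u, he, hu with
    | [], _, _ => exact Or.inr (Or.inr (Or.inr ⟨m, k, by simp⟩))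
    | true :: u, _, _ => exact Or.inr (Or.inl ⟨m, k, u, by simp⟩)
    | [false], ⟨j, hj⟩, _ => simp [reps_length] at hj; omega
    | false :: false :: u, _, _ => exact Or.inr (Or.inr (Or.inl ⟨m, k, u, by simp⟩))
    | false :: true :: u, _, hu => exact absurd ⟨u, rfl⟩ hu
  · exact Or.inl ⟨k, Y, by simp⟩

lemma reps_tf_append_false_prefix (k : ℕ) (X : List Bool) :
    reps [true, false] k ++ [false] <+: reps [true, false] k ++ false :: X :=
  ⟨X, by simp⟩

theorem Fam10.fam0 {r : List Bool} : Fam10 r → Fam0 r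
  | ⟨k, hk⟩ => ⟨k, (reps_tf_append_false_prefix k _).trans hk⟩

theorem Fam1_00.fam0 {r : List Bool} : Fam1_00 r → Fam0 r
  | ⟨_, k, hk⟩ => ⟨k, (reps_tf_append_false_prefix k _).trans hk⟩

theorem Fam00_00.fam0 {r : List Bool} : Fam00_00 r → Fam0 r
  | ⟨_, k, hk⟩ => ⟨k, (reps_tf_append_false_prefix k _).trans hk⟩

theorem FamExact.fam0 {r : List Bool} : FamExact r → Fam0 r
  | ⟨_, k, hk⟩ => ⟨k, hk ▸ reps_tf_append_false_prefix k _⟩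

theorem fam0_iff {r : List Bool} (he : Even r.length) :
    Fam0 r ↔ Fam10 r ∨ Fam1_00 r ∨ Fam00_00 r ∨ FamExact r :=
  ⟨fam0_split he, by rintro (h | h | h | h) <;> exact h.fam0⟩

theorem tail_prefix_of_reps_tf_append {k k' : ℕ} {X Y : List Bool}
    (h : reps [true, false] k ++ false :: X <+: reps [true, false] k' ++ false :: Y) : X <+: Y :=
  List.cons_prefix_cons.mp (reps_append_prefix_cancel (by simp) (by simp) (by simp) h).2 |>.2

theorem tails_comparable_of_reps_tf_append {r X Y : List Bool} {k k' : ℕ}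
    (hX : reps [true, false] k ++ false :: X <+: r) (hY : reps [true, false] k' ++ false :: Y <+: r) :
    X <+: Y ∨ Y <+: X :=
  (List.prefix_or_prefix_of_prefix hX hY).imp tail_prefix_of_reps_tf_append
    tail_prefix_of_reps_tf_append

theorem pairwiseDisjoint4_fam (r : List Bool) :
    PairwiseDisjoint4 (Fam10 r) (Fam1_00 r) (Fam00_00 r) (FamExact r) := by
  refine ⟨?_, ?_, ?_, ?_, ?_, ?_⟩
  · rintro ⟨⟨k, hA⟩, m, k', hB⟩
    simpa using tails_comparable_of_reps_tf_append hA hB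
  · rintro ⟨⟨k, hA⟩, m, k', hC⟩
    simpa using tails_comparable_of_reps_tf_append hA hC
  · rintro ⟨⟨k, hA⟩, m, k', rfl⟩
    simpa using tail_prefix_of_reps_tf_append hA
  · rintro ⟨⟨m, k, hB⟩, m', k', hC⟩
    rcases tails_comparable_of_reps_tf_append hB hC with h | h <;>
      simpa using (reps_append_prefix_cancel (by simp) (by simp) (by simp)
        (List.cons_prefix_cons.mp h).2).2
  · rintro ⟨⟨m, k, hB⟩, m', k', rfl⟩
    have h := (List.cons_prefix_cons.mp (tail_prefix_of_reps_tf_append hB)).2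
    rw [← List.append_nil (reps [false, true] m')] at h
    simpa using (reps_append_prefix_cancel (by simp) (by simp) (by simp) h).2
  · rintro ⟨⟨m, k, hC⟩, m', k', rfl⟩
    have h := (List.cons_prefix_cons.mp (tail_prefix_of_reps_tf_append hC)).2
    rw [← List.append_nil (reps [false, true] m')] at h
    simpa using (reps_append_prefix_cancel (by simp) (by simp) (by simp) h).2

section Reversal

variable (v : List Bool)

theorem exists_endsWith_iff_fam0 :
    (∃ k, EndsWith v ([false] ++ reps [false, true] k)) ↔ Fam0 v.reverse := by
  simp [Fam0, endsWith_iff_reverse_prefix, reps_reverse]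

theorem exists_endsWith_iff_fam10 :
    (∃ k, EndsWith v ([true, false] ++ reps [false, true] k)) ↔ Fam10 v.reverse := by
  simp [Fam10, endsWith_iff_reverse_prefix, reps_reverse]

theorem exists_endsWith_iff_fam1_00 :
    (∃ m k, EndsWith v
      ([true] ++ reps [true, false] m ++ [false, false] ++ reps [false, true] k)) ↔
      Fam1_00 v.reverse := by
  simp [Fam1_00, endsWith_iff_reverse_prefix, reps_reverse]

theorem exists_endsWith_iff_fam00_00 :
    (∃ m k, EndsWith v
      ([false, false] ++ reps [true, false] m ++ [false, false] ++ reps [false, true] k)) ↔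
      Fam00_00 v.reverse := by
  simp [Fam00_00, endsWith_iff_reverse_prefix, reps_reverse]

theorem exists_eq_iff_famExact {p : ℕ} (hv : v.length = 2 * p) :
    (∃ k ≤ p - 1, v = reps [true, false] k ++ [false, false] ++ reps [false, true] (p - k - 1)) ↔
      FamExact v.reverse := by
  constructor
  · rintro ⟨k, -, rfl⟩
    exact ⟨k, p - k - 1, by simp [reps_reverse]⟩
  · rintro ⟨m, k, hr⟩
    have hlen := congrArg List.length hr
    simp only [List.length_reverse, hv, List.length_append, List.length_cons, List.length_nil,
      reps_length] at hlen
    refine ⟨m, by omega, ?_⟩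
    rw [← List.reverse_reverse v, hr, show p - m - 1 = k by omega]
    simp [reps_reverse]

end Reversal

end Decomposition

open Decomposition in
theorem decomposition_001_general (p : ℕ) (v : List Bool)
    (hv : v.length = 2 * p) :
    ((∃ k, EndsWith v ([false] ++ reps [false, true] k)) ↔
      ((∃ k, EndsWith v ([true, false] ++ reps [false, true] k)) ∨
       (∃ m k, EndsWith v
          ([true] ++ reps [true, false] m ++ [false, false] ++ reps [false, true] k)) ∨
       (∃ m k, EndsWith v
          ([false, false] ++ reps [true, false] m ++ [false, false] ++ reps [false, true] k)) ∨
       (∃ k ≤ p - 1, v = reps [true, false] k ++ [false, false] ++ reps [false, true] (p - k - 1)))) ∧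
    PairwiseDisjoint4
      (∃ k, EndsWith v ([true, false] ++ reps [false, true] k))
      (∃ m k, EndsWith v
        ([true] ++ reps [true, false] m ++ [false, false] ++ reps [false, true] k))
      (∃ m k, EndsWith v
        ([false, false] ++ reps [true, false] m ++ [false, false] ++ reps [false, true] k))
      (∃ k ≤ p - 1, v = reps [true, false] k ++ [false, false] ++ reps [false, true] (p - k - 1)) := by
  have he : Even v.reverse.length := ⟨p, by rw [List.length_reverse, hv, two_mul]⟩
  rw [exists_endsWith_iff_fam0, exists_endsWith_iff_fam10, exists_endsWith_iff_fam1_00,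
    exists_endsWith_iff_fam00_00, exists_eq_iff_famExact v hv]
  exact ⟨fam0_iff he, pairwiseDisjoint4_fam _⟩

/-- For every `p ≥ 2`, the family `⟨0[01]^*⟩` of subsets of `[2p]` decomposes as
the disjoint union
`⟨10[01]^*⟩ ⊔ ⟨1[10]^*00[01]^*⟩ ⊔ ⟨00[10]^*00[01]^*⟩ ⊔ {[10]^k 00 [01]^{p-k-1} : 0 ≤ k ≤ p-1}`. -/
theorem decomposition_001 (p : ℕ) (hp : 2 ≤ p) (v : List Bool)
    (hv : v.length = 2 * p) :
    ((∃ k, EndsWith v ([false] ++ reps [false, true] k)) ↔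
      ((∃ k, EndsWith v ([true, false] ++ reps [false, true] k)) ∨
       (∃ m k, EndsWith v
          ([true] ++ reps [true, false] m ++ [false, false] ++ reps [false, true] k)) ∨
       (∃ m k, EndsWith v
          ([false, false] ++ reps [true, false] m ++ [false, false] ++ reps [false, true] k)) ∨
       (∃ k ≤ p - 1, v = reps [true, false] k ++ [false, false] ++ reps [false, true] (p - k - 1)))) ∧
    PairwiseDisjoint4
      (∃ k, EndsWith v ([true, false] ++ reps [false, true] k))
      (∃ m k, EndsWith v
        ([true] ++ reps [true, false] m ++ [false, false] ++ reps [false, true] k))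
      (∃ m k, EndsWith v
        ([false, false] ++ reps [true, false] m ++ [false, false] ++ reps [false, true] k))
      (∃ k ≤ p - 1, v = reps [true, false] k ++ [false, false] ++ reps [false, true] (p - k - 1)) :=
  decomposition_001_general p v hv
end

section
/- The binomial Diophantine equation x_1·C(n,1) + x_2·C(n,2) + ... + x_{n-1}·C(n,n-1) = 1 has an integer solution if and only if n is not a prime power. -/
/-!
An integer combination of the `C(n,k)` equals `1` exactly when their gcd is `1` (Bézout over
`ℤ`). If `n = p^m`, every `C(n,k)` with `0 < k < n` is divisible by `p`; otherwise Lucas'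
theorem shows that no prime divides all of them, so their gcd is `1`.
-/

open Finset

theorem Finset.exists_sum_mul_eq_one_iff_isUnit_gcd {ι R : Type*} [CommRing R] [IsBezout R]
    [NormalizedGCDMonoid R] (s : Finset ι) (f : ι → R) :
    (∃ x : ι → R, ∑ k ∈ s, x k * f k = 1) ↔ IsUnit (s.gcd f) := by
  constructor
  · rintro ⟨x, hx⟩
    exact isUnit_of_dvd_one (hx ▸ dvd_sum fun k hk => dvd_mul_of_dvd_right (gcd_dvd hk) _)
  · rintro ⟨u, hu⟩
    obtain ⟨g, hg⟩ := s.gcd_eq_sum_mul f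
    refine ⟨fun k => g k * ↑u⁻¹, ?_⟩
    calc ∑ k ∈ s, g k * ↑u⁻¹ * f k = (∑ k ∈ s, f k * g k) * ↑u⁻¹ := by
          rw [sum_mul]; exact sum_congr rfl fun k _ => by ring
      _ = 1 := by rw [← hg, ← hu, Units.mul_inv]

theorem Int.natCast_finsetGcd {ι : Type*} (s : Finset ι) (f : ι → ℕ) :
    ((s.gcd f : ℕ) : ℤ) = s.gcd fun k => (f k : ℤ) := by
  classical
  induction s using Finset.induction_on with
  | empty => simp
  | insert a s _ ih =>
    rw [gcd_insert, gcd_insert, ← ih, ← Int.coe_gcd, Int.gcd_natCast_natCast]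
    rfl

theorem Nat.gcd_choose_eq_one_iff {n : ℕ} (hn : 1 < n) :
    (Icc 1 (n - 1)).gcd n.choose = 1 ↔ ¬ IsPrimePow n := by
  refine ⟨fun h hpow => ?_, Choose.gcd_choose_eq_one_of_not_isPrimePow hn⟩
  rw [Choose.gcd_choose_eq_minFac_of_isPrimePow hpow, Nat.minFac_eq_one_iff] at h
  omega

/-- The binomial Diophantine equation
`x_1·C(n,1) + x_2·C(n,2) + ... + x_{n-1}·C(n,n-1) = 1` has an integer solution
if and only if `n` is not a prime power. -/
theorem binomial_diophantine_solvable (n : ℕ) (hn : 2 ≤ n) :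
    (∃ x : ℕ → ℤ, ∑ k ∈ Finset.Ico 1 n, x k * (n.choose k : ℤ) = 1) ↔
      ¬ IsPrimePow n := by
  have hIco : Ico 1 n = Icc 1 (n - 1) := by ext k; simp only [mem_Ico, mem_Icc]; omega
  rw [exists_sum_mul_eq_one_iff_isUnit_gcd, ← Int.natCast_finsetGcd, Int.isUnit_iff_natAbs_eq,
    Int.natAbs_natCast, hIco, Nat.gcd_choose_eq_one_iff (by omega)]
end
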